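/- arXiv:0906.1782 — 2 statements merged into one kernel-verified Lean document; each statement's English description precedes it below -/
import Mathlib

section
/- Let $(M_t)_{t\ge0}$ be a continuous uniformly integrable martingale with terminal value $M_\infty$, and let $g=\sup\{t\ge0: M_t=0\}$. Then for every $t\ge0$, almost surely $|M_t| = \mathbb{E}[|M_\infty|\,\mathbf{1}_{g\le t}\mid \mathcal{F}_t]$. -/
open MeasureTheory Filter Set
open scoped NNReal ENNReal Topology

/-!
Fix `r` and let `τ` be the first zero of `M` after `r`, so that `{τ = ∞}` is the event that
`M` has no zero on `[r, ∞)`. Optional stopping for the closed martingale `M` gives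
`E[M∞ 1_{τ = ∞} | 𝓕 r] = M r`; it is applied to the hitting times of finer and finer dyadic
grids, whose stopped values converge a.s. to `M∞ 1_{τ = ∞}` (to `M τ = 0` when `τ < ∞`), and in
`L¹` because they are conditional expectations of `M∞`. On `{τ = ∞}` the continuous path never
changes sign, so `sign (M r) · M∞ 1_{τ = ∞} = |M∞| 1_{τ = ∞}`, and pulling the `𝓕 r`-measurable
factor `sign (M r)` out of the conditional expectation gives `E[|M∞| 1_{τ = ∞} | 𝓕 r] = |M r|`.
Finally `{g ≤ t}` is the decreasing limit of these events as `r ↓ t`, while `M r → M t` in `L¹`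
by continuity and uniform integrability.
-/

lemma Real.measurable_sign : Measurable Real.sign :=
  Measurable.ite measurableSet_Iio measurable_const
    (Measurable.ite measurableSet_Ioi measurable_const measurable_const)

lemma Real.sign_mul_self (x : ℝ) : Real.sign x * x = |x| := by
  rcases lt_trichotomy x 0 with hx | rfl | hx
  · rw [Real.sign_of_neg hx, abs_of_neg hx, neg_one_mul]
  · simp
  · rw [Real.sign_of_pos hx, abs_of_pos hx, one_mul]

lemma Real.sign_mul_eq_abs_of_nonneg_mul {a c : ℝ} (ha : a ≠ 0) (hac : 0 ≤ a * c) :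
    Real.sign a * c = |c| := by
  rcases ha.lt_or_gt with ha | ha
  · rw [Real.sign_of_neg ha, abs_of_nonpos (nonpos_of_mul_nonneg_right hac ha), neg_one_mul]
  · rw [Real.sign_of_pos ha, abs_of_nonneg (nonneg_of_mul_nonneg_right hac ha), one_mul]

lemma sign_mul_eq_abs_of_tendsto {f : ℝ≥0 → ℝ} (hf : Continuous f) {r : ℝ≥0}
    (hr : ∀ u, r ≤ u → f u ≠ 0) {c : ℝ} (hc : Tendsto f atTop (𝓝 c)) :
    Real.sign (f r) * c = |c| := by
  have hpos : ∀ u, r ≤ u → 0 < f r * f u := fun u hu => by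
    by_contra! h
    obtain ⟨v, hv, hv0⟩ := intermediate_value_uIcc (hf.continuousOn (s := uIcc r u))
      (mem_uIcc.2 <| (mul_nonpos_iff.1 h).symm.imp_right And.symm)
    rw [uIcc_of_le hu] at hv
    exact hr v hv.1 hv0
  refine Real.sign_mul_eq_abs_of_nonneg_mul (hr r le_rfl) ?_
  exact ge_of_tendsto (hc.const_mul (f r)) (eventually_atTop.2 ⟨r, fun u hu => (hpos u hu).le⟩)

noncomputable def dyadicGrid (r : ℝ≥0) (n k : ℕ) : ℝ≥0 := r + k / 2 ^ n

lemma dyadicGrid_mono (r : ℝ≥0) (n : ℕ) : Monotone (dyadicGrid r n) := fun i j hij => by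
  unfold dyadicGrid; gcongr

@[simp] lemma dyadicGrid_zero (r : ℝ≥0) (n : ℕ) : dyadicGrid r n 0 = r := by simp [dyadicGrid]

lemma dyadicGrid_succ (r : ℝ≥0) (n k : ℕ) :
    dyadicGrid r n (k + 1) = dyadicGrid r n k + 1 / 2 ^ n := by
  simp only [dyadicGrid, Nat.cast_succ, add_div, add_assoc]

lemma dyadicGrid_mul_two_pow (r : ℝ≥0) (n : ℕ) : dyadicGrid r n (n * 2 ^ n) = r + n := by
  simp [dyadicGrid]

namespace MeasureTheory

variable {Ω : Type*}

noncomputable def gridZeroIndex (M : ℝ≥0 → Ω → ℝ) (r : ℝ≥0) (n : ℕ) : Ω → ℕ :=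
  hittingBtwn (fun k ω => ∃ u ∈ Icc r (dyadicGrid r n k), M u ω = 0) {p | p} 0 (n * 2 ^ n)

def noZeroFrom (M : ℝ≥0 → Ω → ℝ) (r : ℝ≥0) : Set Ω := {ω | ∀ u, r ≤ u → M u ω ≠ 0}

variable {M : ℝ≥0 → Ω → ℝ} {r : ℝ≥0} {ω : Ω}

lemma gridZeroIndex_le (n : ℕ) : gridZeroIndex M r n ω ≤ n * 2 ^ n := hittingBtwn_le ω

lemma dyadicGrid_gridZeroIndex_of_mem_noZeroFrom (hω : ω ∈ noZeroFrom M r) (n : ℕ) :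
    dyadicGrid r n (gridZeroIndex M r n ω) = r + n := by
  rw [gridZeroIndex, hittingBtwn, if_neg, dyadicGrid_mul_two_pow]
  rintro ⟨k, -, u, hu, hu0⟩
  exact hω u hu.1 hu0

lemma dyadicGrid_gridZeroIndex_mem_Icc {d : ℝ≥0} (hrd : r ≤ d) (hd : M d ω = 0)
    (hfirst : ∀ u ∈ Ico r d, M u ω ≠ 0) {n : ℕ} (hdn : d ≤ r + n) :
    dyadicGrid r n (gridZeroIndex M r n ω) ∈ Icc d (d + 1 / 2 ^ n) := by
  let P : ℕ → Ω → Prop := fun k ω => ∃ u ∈ Icc r (dyadicGrid r n k), M u ω = 0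
  have hex : ∃ j ∈ Icc 0 (n * 2 ^ n), P j ω ∈ {p | p} :=
    ⟨n * 2 ^ n, ⟨Nat.zero_le _, le_rfl⟩, d, ⟨hrd, (dyadicGrid_mul_two_pow r n).symm ▸ hdn⟩, hd⟩
  constructor
  · obtain ⟨u, hu, hu0⟩ : P (gridZeroIndex M r n ω) ω := hittingBtwn_mem_set hex
    exact (not_lt.1 fun hud => hfirst u ⟨hu.1, hud⟩ hu0).trans hu.2
  · rcases Nat.eq_zero_or_eq_succ_pred (gridZeroIndex M r n ω) with h0 | hsucc
    · rw [h0, dyadicGrid_zero]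
      exact hrd.trans le_self_add
    · set j := (gridZeroIndex M r n ω).pred
      have hj : ¬ ∃ u ∈ Icc r (dyadicGrid r n j), M u ω = 0 :=
        notMem_of_lt_hittingBtwn (hsucc ▸ Nat.lt_succ_self j) (Nat.zero_le j)
      have hjd : dyadicGrid r n j < d := not_le.1 fun h => hj ⟨d, ⟨hrd, h⟩, hd⟩
      rw [hsucc, dyadicGrid_succ]
      gcongr

lemma tendsto_gridZeroIndex_of_notMem_noZeroFrom (hcont : Continuous (M · ω))
    (hω : ω ∉ noZeroFrom M r) :
    Tendsto (fun n => M (dyadicGrid r n (gridZeroIndex M r n ω)) ω) atTop (𝓝 0) := by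
  set Z : Set ℝ≥0 := Ici r ∩ (M · ω) ⁻¹' {0}
  have hZ : IsClosed Z := isClosed_Ici.inter (isClosed_singleton.preimage hcont)
  obtain ⟨u, hu, hu0⟩ : ∃ u, r ≤ u ∧ M u ω = 0 := by simpa [noZeroFrom] using hω
  obtain ⟨hrd, hd⟩ : r ≤ sInf Z ∧ M (sInf Z) ω = 0 :=
    hZ.csInf_mem ⟨u, hu, hu0⟩ (OrderBot.bddBelow Z)
  have hfirst : ∀ u ∈ Ico r (sInf Z), M u ω ≠ 0 := fun u hu hu0 =>
    (csInf_le (OrderBot.bddBelow Z) ⟨hu.1, hu0⟩).not_gt hu.2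
  have hmem : ∀ᶠ n : ℕ in atTop,
      dyadicGrid r n (gridZeroIndex M r n ω) ∈ Icc (sInf Z) (sInf Z + 1 / 2 ^ n) := by
    filter_upwards [(tendsto_atTop_mono (fun _ => le_add_self)
      tendsto_natCast_atTop_atTop).eventually_ge_atTop (sInf Z)] with n hn
    exact dyadicGrid_gridZeroIndex_mem_Icc hrd hd hfirst hn
  have htime : Tendsto (fun n => dyadicGrid r n (gridZeroIndex M r n ω)) atTop (𝓝 (sInf Z)) := by
    refine tendsto_of_tendsto_of_tendsto_of_le_of_le' tendsto_const_nhds ?_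
      (hmem.mono fun n hn => hn.1) (hmem.mono fun n hn => hn.2)
    have h2 : Tendsto (fun n : ℕ => (1 / 2 ^ n : ℝ≥0)) atTop (𝓝 0) := by
      simpa only [one_div, inv_pow] using
        NNReal.tendsto_pow_atTop_nhds_zero_of_lt_one (r := 2⁻¹) (by norm_num)
    simpa using tendsto_const_nhds.add h2
  have := (hcont.tendsto _).comp htime
  rwa [hd] at this

lemma measurableSet_exists_mem_Icc_eq_zero {mΩ : MeasurableSpace Ω} {X : ℝ≥0 → Ω → ℝ}
    {a b : ℝ≥0} (hX : ∀ u ∈ Icc a b, Measurable (X u)) (hcont : ∀ ω, Continuous (X · ω)) :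
    MeasurableSet {ω | ∃ u ∈ Icc a b, X u ω = 0} := by
  obtain ⟨D, hDc, hDd⟩ := TopologicalSpace.exists_countable_dense (Icc a b)
  have hkey : {ω | ∃ u ∈ Icc a b, X u ω = 0} =
      ⋂ n : ℕ, ⋃ q ∈ D, {ω | |X q ω| < 1 / ((n : ℝ) + 1)} := by
    ext ω
    simp only [mem_ofPred_eq, mem_iInter, mem_iUnion, exists_prop]
    constructor
    · rintro ⟨u, hu, hu0⟩ n
      refine hDd.exists_mem_open (U := {v : Icc a b | |X v ω| < 1 / ((n : ℝ) + 1)})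
        (isOpen_lt ((hcont ω).comp continuous_subtype_val).abs continuous_const) ⟨⟨u, hu⟩, ?_⟩
      change |X u ω| < _
      rw [hu0, abs_zero]
      positivity
    · intro h
      choose q hqD hq using h
      obtain ⟨u, hu, φ, hφ, hlim⟩ := isCompact_Icc.tendsto_subseq fun n => (q n).2
      refine ⟨u, hu, abs_eq_zero.1 <|
        tendsto_nhds_unique ((hcont ω).tendsto u |>.comp hlim).abs ?_⟩
      refine squeeze_zero (fun _ => abs_nonneg _) (fun k => (hq (φ k)).le.trans ?_)
        tendsto_one_div_add_atTop_nhds_zero_nat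
      gcongr
      exact hφ.le_apply
  rw [hkey]
  exact .iInter fun n => .biUnion hDc fun q _ =>
    measurableSet_lt (hX q q.2).abs measurable_const

lemma measurableSet_noZeroFrom {mΩ : MeasurableSpace Ω} (hM : ∀ u, Measurable (M u))
    (hcont : ∀ ω, Continuous (M · ω)) (r : ℝ≥0) : MeasurableSet (noZeroFrom M r) := by
  have : noZeroFrom M r = (⋃ n : ℕ, {ω | ∃ u ∈ Icc r (r + n), M u ω = 0})ᶜ := by
    ext ω
    simp only [noZeroFrom, mem_compl_iff, mem_iUnion, mem_ofPred_eq, not_exists, not_and]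
    refine ⟨fun h n u hu => h u hu.1, fun h u hu => h ⌈u⌉₊ u ⟨hu, ?_⟩⟩
    exact (Nat.le_ceil u).trans le_add_self
  rw [this]
  exact (MeasurableSet.iUnion fun n =>
    measurableSet_exists_mem_Icc_eq_zero (fun u _ => hM u) hcont).compl

lemma iInter_noZeroFrom_eq {t : ℝ≥0} {q : ℕ → ℝ≥0} (htq : ∀ n, t < q n)
    (hq : Tendsto q atTop (𝓝 t)) :
    ⋂ n, noZeroFrom M (q n) = {ω | ∀ u, t < u → M u ω ≠ 0} := by
  ext ω
  simp only [mem_ofPred_eq, mem_iInter, noZeroFrom]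
  refine ⟨fun h u hu => ?_, fun h n u hu => h u ((htq n).trans_le hu)⟩
  obtain ⟨n, hn⟩ := (hq.eventually (ge_mem_nhds hu)).exists
  exact h n u hn

variable {m : MeasurableSpace Ω} {μ : Measure Ω}

def Filtration.comp {ι κ : Type*} [Preorder ι] [Preorder κ]
    (𝓕 : Filtration ι m) {s : κ → ι} (hs : Monotone s) : Filtration κ m where
  seq k := 𝓕 (s k)
  mono' _ _ hij := 𝓕.mono (hs hij)
  le' k := 𝓕.le (s k)

lemma Martingale.comp {ι κ E : Type*} [Preorder ι] [Preorder κ] [NormedAddCommGroup E]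
    [NormedSpace ℝ E] [CompleteSpace E] {𝓕 : Filtration ι m} {X : ι → Ω → E} (hX : Martingale X 𝓕 μ) {s : κ → ι} (hs : Monotone s) :
    Martingale (fun k => X (s k)) (𝓕.comp hs) μ :=
  ⟨fun k => hX.stronglyAdapted (s k), fun _ _ hij => hX.condExp_ae_eq (hs hij)⟩

lemma isStoppingTime_gridZeroIndex {𝓕 : Filtration ℝ≥0 m} (hM : Adapted 𝓕 M)
    (hcont : ∀ ω, Continuous (M · ω)) (r : ℝ≥0) (n : ℕ) :
    IsStoppingTime (𝓕.comp (dyadicGrid_mono r n)) (fun ω => (gridZeroIndex M r n ω : WithTop ℕ)) :=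
  Adapted.isStoppingTime_hittingBtwn (fun _ => (@measurableSet_setOfPred _ (𝓕 _) _).1 <|
    measurableSet_exists_mem_Icc_eq_zero (fun u hu => (hM u).mono (𝓕.mono hu.2) le_rfl) hcont)
    MeasurableSpace.measurableSet_top

theorem UnifIntegrable.norm {ι E : Type*} [NormedAddCommGroup E] {f : ι → Ω → E}
    {p : ℝ≥0∞} (hf : UnifIntegrable f p μ) : UnifIntegrable (fun i ω => ‖f i ω‖) p μ := by
  intro ε hε
  obtain ⟨δ, hδ, h⟩ := hf hε
  refine ⟨δ, hδ, fun i s hs hμs => ?_⟩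
  have : s.indicator (fun ω => ‖f i ω‖) = fun ω => ‖s.indicator (f i) ω‖ :=
    funext fun ω => (norm_indicator_eq_indicator_norm _ ω).symm
  rw [this, eLpNorm_norm]
  exact h i s hs hμs

theorem tendsto_setIntegral_of_unifIntegrable [IsFiniteMeasure μ] {E : Type*}
    [NormedAddCommGroup E] [NormedSpace ℝ E] {X : ℕ → Ω → E} {L : Ω → E}
    (hX : ∀ n, Integrable (X n) μ) (hUI : UnifIntegrable X 1 μ) (hL : Integrable L μ)
    (hlim : ∀ᵐ ω ∂μ, Tendsto (X · ω) atTop (𝓝 (L ω))) (s : Set Ω) :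
    Tendsto (fun n => ∫ ω in s, X n ω ∂μ) atTop (𝓝 (∫ ω in s, L ω ∂μ)) :=
  tendsto_setIntegral_of_L1' L hL.1 (.of_forall hX)
    (tendsto_Lp_finite_of_tendsto_ae le_rfl ENNReal.one_ne_top (fun n => (hX n).1)
      (memLp_one_iff_integrable.2 hL) hUI hlim) s

theorem condExp_ae_eq_of_tendsto_condExp [IsFiniteMeasure μ] {m' : MeasurableSpace Ω}
    {G : ℕ → MeasurableSpace Ω} (hG : ∀ n, G n ≤ m) (hm'G : ∀ n, m' ≤ G n)
    {f L : Ω → ℝ} {X : ℕ → Ω → ℝ} (hf : Integrable f μ) (hL : Integrable L μ)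
    (hX : ∀ n, X n =ᵐ[μ] μ[f | G n]) (hlim : ∀ᵐ ω ∂μ, Tendsto (X · ω) atTop (𝓝 (L ω))) :
    μ[L | m'] =ᵐ[μ] μ[f | m'] := by
  have hm' : m' ≤ m := (hm'G 0).trans (hG 0)
  have hUI : UnifIntegrable X 1 μ :=
    (hf.uniformIntegrable_condExp hG).2.1.ae_eq fun n => (hX n).symm
  refine ae_eq_condExp_of_forall_setIntegral_eq hm' hf
    (fun _ _ _ => integrable_condExp.integrableOn) (fun s hs _ => ?_)
    stronglyMeasurable_condExp.aestronglyMeasurable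
  rw [setIntegral_condExp hm' hL hs]
  refine tendsto_nhds_unique (tendsto_setIntegral_of_unifIntegrable
    (fun n => integrable_condExp.congr (hX n).symm) hUI hL hlim s) ?_
  have hXs : ∀ n, ∫ ω in s, X n ω ∂μ = ∫ ω in s, f ω ∂μ := fun n =>
    (integral_congr_ae (ae_restrict_of_ae (hX n))).trans
      (setIntegral_condExp (hG n) hf (hm'G n s hs))
  simp_rw [hXs]
  exact tendsto_const_nhds

theorem Martingale.stoppedValue_ae_eq_condExp_of_ae_eq_condExp [IsFiniteMeasure μ] {E : Type*}
    [NormedAddCommGroup E] [NormedSpace ℝ E] [CompleteSpace E] {𝒢 : Filtration ℕ m}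
    {Y : ℕ → Ω → E} (hY : Martingale Y 𝒢 μ) {τ : Ω → WithTop ℕ}
    (hτ : IsStoppingTime 𝒢 τ) {N : ℕ} (hτN : ∀ ω, τ ω ≤ N) {f : Ω → E}
    (hYN : Y N =ᵐ[μ] μ[f | 𝒢 N]) :
    stoppedValue Y τ =ᵐ[μ] μ[f | hτ.measurableSpace] :=
  (hY.stoppedValue_ae_eq_condExp_of_le_const hτ hτN).trans <| (condExp_congr_ae hYN).trans <|
    condExp_condExp_of_le (hτ.measurableSpace_le_of_le_const hτN) (𝒢.le N)

variable {𝓕 : Filtration ℝ≥0 m} {Minf : Ω → ℝ}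

theorem Martingale.ae_eq_condExp_indicator_noZeroFrom [IsFiniteMeasure μ]
    (hM : Martingale M 𝓕 μ) (hcont : ∀ ω, Continuous (M · ω)) (hMinf : Integrable Minf μ)
    (hterm : ∀ t, M t =ᵐ[μ] μ[Minf | 𝓕 t])
    (hconv : ∀ᵐ ω ∂μ, Tendsto (M · ω) atTop (𝓝 (Minf ω))) (r : ℝ≥0) :
    M r =ᵐ[μ] μ[(noZeroFrom M r).indicator Minf | 𝓕 r] := by
  have hτ := isStoppingTime_gridZeroIndex hM.stronglyAdapted.adapted hcont r
  have hτN : ∀ n ω, (gridZeroIndex M r n ω : WithTop ℕ) ≤ (n * 2 ^ n : ℕ) :=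
    fun n ω => WithTop.coe_le_coe.2 (gridZeroIndex_le n)
  have hX : ∀ n, (fun ω => M (dyadicGrid r n (gridZeroIndex M r n ω)) ω)
      =ᵐ[μ] μ[Minf | (hτ n).measurableSpace] := fun n =>
    (hM.comp (dyadicGrid_mono r n)).stoppedValue_ae_eq_condExp_of_ae_eq_condExp (hτ n) (hτN n)
      (by simpa [Filtration.comp, dyadicGrid_mul_two_pow] using hterm (r + n))
  have hFr : ∀ n, 𝓕 r ≤ (hτ n).measurableSpace := fun n => by
    simpa [Filtration.comp] using (hτ n).le_measurableSpace_of_const_le (i := 0) fun ω => by simp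
  have hlim : ∀ᵐ ω ∂μ, Tendsto (fun n => M (dyadicGrid r n (gridZeroIndex M r n ω)) ω) atTop
      (𝓝 ((noZeroFrom M r).indicator Minf ω)) := by
    filter_upwards [hconv] with ω hω
    by_cases h : ω ∈ noZeroFrom M r
    · rw [indicator_of_mem h]
      simp_rw [dyadicGrid_gridZeroIndex_of_mem_noZeroFrom h]
      exact hω.comp <| tendsto_atTop_mono (fun _ => le_add_self) tendsto_natCast_atTop_atTop
    · rw [indicator_of_notMem h]
      exact tendsto_gridZeroIndex_of_notMem_noZeroFrom (hcont ω) h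
  have hNZ := measurableSet_noZeroFrom (fun _ => hM.stronglyAdapted.adapted.measurable) hcont r
  exact (hterm r).trans (condExp_ae_eq_of_tendsto_condExp
    (fun n => (hτ n).measurableSpace_le_of_le (hτN n)) hFr hMinf (hMinf.indicator hNZ) hX hlim).symm

theorem Martingale.abs_ae_eq_condExp_indicator_noZeroFrom [IsFiniteMeasure μ]
    (hM : Martingale M 𝓕 μ) (hcont : ∀ ω, Continuous (M · ω)) (hMinf : Integrable Minf μ)
    (hterm : ∀ t, M t =ᵐ[μ] μ[Minf | 𝓕 t])
    (hconv : ∀ᵐ ω ∂μ, Tendsto (M · ω) atTop (𝓝 (Minf ω))) (r : ℝ≥0) :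
    (fun ω => |M r ω|) =ᵐ[μ] μ[(noZeroFrom M r).indicator (fun ω => |Minf ω|) | 𝓕 r] := by
  set L := (noZeroFrom M r).indicator Minf
  have hL : Integrable L μ := hMinf.indicator (measurableSet_noZeroFrom
    (fun _ => hM.stronglyAdapted.adapted.measurable) hcont r)
  have hsign : (noZeroFrom M r).indicator (fun ω => |Minf ω|)
      =ᵐ[μ] (fun ω => Real.sign (M r ω)) * L := by
    filter_upwards [hconv] with ω hω
    by_cases h : ω ∈ noZeroFrom M r
    · simp [L, indicator_of_mem h, sign_mul_eq_abs_of_tendsto (hcont ω) h hω]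
    · simp [L, indicator_of_notMem h]
  have hsm : StronglyMeasurable[𝓕 r] fun ω => Real.sign (M r ω) :=
    (Real.measurable_sign.comp (hM.stronglyAdapted r).measurable).stronglyMeasurable
  have hbound : ∀ᵐ ω ∂μ, ‖Real.sign (M r ω)‖ ≤ 1 := .of_forall fun ω => by
    rcases Real.sign_apply_eq (M r ω) with h | h | h <;> simp [h]
  calc (fun ω => |M r ω|) = (fun ω => Real.sign (M r ω)) * M r :=
        funext fun ω => (Real.sign_mul_self _).symm
    _ =ᵐ[μ] (fun ω => Real.sign (M r ω)) * μ[L | 𝓕 r] :=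
        EventuallyEq.rfl.mul (hM.ae_eq_condExp_indicator_noZeroFrom hcont hMinf hterm hconv r)
    _ =ᵐ[μ] μ[(fun ω => Real.sign (M r ω)) * L | 𝓕 r] :=
        (condExp_stronglyMeasurable_mul_of_bound (𝓕.le r) hsm hL 1 hbound).symm
    _ =ᵐ[μ] μ[(noZeroFrom M r).indicator (fun ω => |Minf ω|) | 𝓕 r] := condExp_congr_ae hsign.symm

theorem Martingale.abs_ae_eq_condExp_indicator_noZeroAfter [IsFiniteMeasure μ]
    (hM : Martingale M 𝓕 μ) (hcont : ∀ ω, Continuous (M · ω)) (hMinf : Integrable Minf μ)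
    (hterm : ∀ t, M t =ᵐ[μ] μ[Minf | 𝓕 t])
    (hconv : ∀ᵐ ω ∂μ, Tendsto (M · ω) atTop (𝓝 (Minf ω))) (t : ℝ≥0) :
    (fun ω => |M t ω|)
      =ᵐ[μ] μ[{ω | ∀ u, t < u → M u ω ≠ 0}.indicator (fun ω => |Minf ω|) | 𝓕 t] := by
  set q : ℕ → ℝ≥0 := fun n => t + 1 / ((n : ℝ≥0) + 1)
  have htq : ∀ n, t < q n := fun n => lt_add_of_pos_right t (by positivity)
  have hq : Tendsto q atTop (𝓝 t) := by
    rw [← NNReal.tendsto_coe]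
    simpa [q] using tendsto_const_nhds.add (tendsto_one_div_add_atTop_nhds_zero_nat (𝕜 := ℝ))
  have hanti : Antitone fun n => noZeroFrom M (q n) := fun i j hij ω hω u hu =>
    hω u (le_trans (by simp only [q]; gcongr) hu)
  have hNZ : ∀ n, MeasurableSet (noZeroFrom M (q n)) := fun n =>
    measurableSet_noZeroFrom (fun _ => hM.stronglyAdapted.adapted.measurable) hcont (q n)
  have hinter := iInter_noZeroFrom_eq (M := M) htq hq
  have hmeas : MeasurableSet {ω | ∀ u, t < u → M u ω ≠ 0} := hinter ▸ .iInter hNZ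
  have hUI : UnifIntegrable (fun n ω => |M (q n) ω|) 1 μ := by
    simpa only [Real.norm_eq_abs] using ((hMinf.uniformIntegrable_condExp
      fun n => 𝓕.le (q n)).2.1.ae_eq fun n => (hterm (q n)).symm).norm
  refine ae_eq_condExp_of_forall_setIntegral_eq (𝓕.le t) (hMinf.abs.indicator hmeas)
    (fun _ _ _ => (hM.integrable t).abs.integrableOn) (fun C hC _ => ?_)
    ((hM.stronglyAdapted t).norm.aestronglyMeasurable)
  have hlhs : Tendsto (fun n => ∫ ω in C, |M (q n) ω| ∂μ) atTop (𝓝 (∫ ω in C, |M t ω| ∂μ)) :=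
    tendsto_setIntegral_of_unifIntegrable (fun n => (hM.integrable _).abs) hUI
      (hM.integrable t).abs (.of_forall fun ω => ((hcont ω).tendsto t).comp hq |>.abs) C
  have hrhs : ∀ n, ∫ ω in C, |M (q n) ω| ∂μ = ∫ ω in noZeroFrom M (q n) ∩ C, |Minf ω| ∂μ :=
    fun n => by
    rw [integral_congr_ae (ae_restrict_of_ae
      (hM.abs_ae_eq_condExp_indicator_noZeroFrom hcont hMinf hterm hconv (q n))),
      setIntegral_condExp (𝓕.le _) (hMinf.abs.indicator (hNZ n)) (𝓕.mono (htq n).le _ hC),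
      integral_indicator (hNZ n), Measure.restrict_restrict (hNZ n)]
  refine tendsto_nhds_unique hlhs ?_
  simp_rw [hrhs, integral_indicator hmeas, Measure.restrict_restrict hmeas, ← hinter, iInter_inter]
  exact tendsto_setIntegral_of_antitone (fun n => (hNZ n).inter (𝓕.le t _ hC))
    (fun i j hij => inter_subset_inter_left C (hanti hij)) ⟨0, hMinf.abs.integrableOn⟩

end MeasureTheory

theorem stmt_1_general {Ω : Type*} {m : MeasurableSpace Ω} {μ : Measure Ω} [IsProbabilityMeasure μ]
    (𝓕 : Filtration ℝ≥0 m) (M : ℝ≥0 → Ω → ℝ)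
    (hM : Martingale M 𝓕 μ)
    (hcont : ∀ ω, Continuous fun t => M t ω)
    (Minf : Ω → ℝ) (hMinf_int : Integrable Minf μ)
    (hterm : ∀ t : ℝ≥0, M t =ᵐ[μ] μ[Minf | 𝓕 t])
    (hconv : ∀ᵐ ω ∂μ, Tendsto (fun t => M t ω) atTop (𝓝 (Minf ω)))
    (g : Ω → ℝ≥0∞)
    (hg : ∀ ω, g ω = sSup ((fun s : ℝ≥0 => (s : ℝ≥0∞)) '' {s | M s ω = 0}))
    (t : ℝ≥0) :
    (fun ω => |M t ω|)
      =ᵐ[μ] μ[fun ω =>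
        |Minf ω| * Set.indicator {ω' | g ω' ≤ (t : ℝ≥0∞)} (fun _ => (1 : ℝ)) ω | 𝓕 t] := by
  have hg_le : {ω | g ω ≤ t} = {ω | ∀ u, t < u → M u ω ≠ 0} := by
    ext ω
    simp only [mem_ofPred_eq, hg, sSup_le_iff, forall_mem_image, ENNReal.coe_le_coe]
    exact forall_congr' fun u => not_imp_not.symm.trans (by simp only [not_le])
  have hintegrand : (fun ω => |Minf ω| * {ω | g ω ≤ t}.indicator (fun _ => (1 : ℝ)) ω)
      = {ω | g ω ≤ t}.indicator fun ω => |Minf ω| := by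
    ext ω
    by_cases h : g ω ≤ t <;> simp [h]
  rw [hintegrand, hg_le]
  exact hM.abs_ae_eq_condExp_indicator_noZeroAfter hcont hMinf_int hterm hconv t

/-- for a continuous uniformly integrable martingale `M` with terminal value
`M∞` and `g = sup {t : M t = 0}`, one has a.s. `|M t| = E[|M∞| 1_{g ≤ t} | 𝓕 t]`. -/
theorem stmt_1 {Ω : Type*} {m : MeasurableSpace Ω} {μ : Measure Ω} [IsProbabilityMeasure μ]
    (𝓕 : Filtration ℝ≥0 m) (M : ℝ≥0 → Ω → ℝ)
    (hM : Martingale M 𝓕 μ)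
    (hcont : ∀ ω, Continuous fun t => M t ω)
    (hui : UniformIntegrable M 1 μ)
    (Minf : Ω → ℝ) (hMinf_int : Integrable Minf μ)
    (hterm : ∀ t : ℝ≥0, M t =ᵐ[μ] μ[Minf | 𝓕 t])
    (hconv : ∀ᵐ ω ∂μ, Tendsto (fun t => M t ω) atTop (𝓝 (Minf ω)))
    (g : Ω → ℝ≥0∞)
    (hg : ∀ ω, g ω = sSup ((fun s : ℝ≥0 => (s : ℝ≥0∞)) '' {s | M s ω = 0}))
    (t : ℝ≥0) :
    (fun ω => |M t ω|)
      =ᵐ[μ] μ[fun ω =>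
        |Minf ω| * Set.indicator {ω' | g ω' ≤ (t : ℝ≥0∞)} (fun _ => (1 : ℝ)) ω | 𝓕 t] :=
  stmt_1_general 𝓕 M hM hcont Minf hMinf_int hterm hconv g hg t
end

section
/- Let $X$ be a true submartingale of class $(\Sigma)$, $f:\mathbb{R}_+\to\mathbb{R}_+$ bounded, integrable, strictly positive with $G/f$ bounded, where $G(x)=\int_x^\infty f(y)dy$, and suppose $\mathcal{P}^f$ is a finite measure on $\mathcal{F}$ whose restriction to each $\mathcal{F}_t$ has density $M^f_t=G(A_t)+f(A_t)X_t$ with respect to $\mathbb{P}$. Then for all $u\ge0$, $\mathcal{P}^f[A_\infty>u]\le G(u)$, and consequently $\mathcal{P}^f[A_\infty=\infty]=0$. -/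
open MeasureTheory Filter Set
open scoped NNReal ENNReal Topology

/-- The Lebesgue–Stieltjes measure associated with a monotone continuous function on `ℝ`. -/
noncomputable def lsMeasure (A : ℝ → ℝ) (hmono : Monotone A) (hcont : Continuous A) :
    MeasureTheory.Measure ℝ :=
  StieltjesFunction.measure ⟨A, hmono, fun _ => hcont.continuousWithinAt⟩

/-- The Lebesgue–Stieltjes measure of a monotone continuous function indexed by `ℝ≥0`. -/
noncomputable def lsMeasureNN (A : ℝ≥0 → ℝ) (hmono : Monotone A) (hcont : Continuous A) :
    MeasureTheory.Measure ℝ :=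
  lsMeasure (fun t : ℝ => A (Real.toNNReal t))
    (fun _ _ h => hmono (Real.toNNReal_mono h))
    (hcont.comp continuous_real_toNNReal)

/-!
Instead of stopping at `τ_u`, approximate it from the right. On `{A_∞ > u}` let `τ` be the last
time with `A_τ ≤ u`; `A` increases strictly right after `τ` and `dA` does not charge `{X ≠ 0}`,
so `X_τ = 0`, and by right-continuity every dense set of times contains some `s > τ` with
`A_s > u` and `X_s ≤ δ`. At such a time the density `M^f_s = G(A_s) + f(A_s) X_s` is at most
`G(u) + C δ`. Cutting a finite union of these events by first entrance gives disjoint pieces,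
each measurable at its own time, so `𝒫^f` of the union is at most `(G(u) + C δ) ℙ(union)`.
Letting the finite set exhaust a countable dense set and `δ → 0` gives `𝒫^f[A_∞ > u] ≤ G(u)`,
and `G(u) → 0` gives the second claim.
-/

section DensityBound

variable {Ω ι : Type*} {m : MeasurableSpace Ω} [LinearOrder ι] {𝓕 : Filtration ι m}
  {μ ν : Measure Ω} {M : ι → Ω → ℝ} {c : ℝ} {B : ι → Set Ω}

theorem measure_biUnion_finset_le_of_density_le
    (hν : ∀ t Λ, MeasurableSet[𝓕 t] Λ → ν Λ = ∫⁻ ω in Λ, ENNReal.ofReal (M t ω) ∂μ)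
    (hB : ∀ t, MeasurableSet[𝓕 t] (B t)) (hM : ∀ t, ∀ ω ∈ B t, M t ω ≤ c) (F : Finset ι) :
    ν (⋃ t ∈ F, B t) ≤ ENNReal.ofReal c * μ (⋃ t ∈ F, B t) := by
  classical
  induction F using Finset.induction_on_max with
  | empty => simp
  | insert a F hlt ih =>
    set U := ⋃ t ∈ F, B t
    have hU : MeasurableSet[𝓕 a] U :=
      Finset.measurableSet_biUnion F fun t ht => 𝓕.mono (hlt t ht).le _ (hB t)
    have hdiff : MeasurableSet[𝓕 a] (B a \ U) := (hB a).diff hU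
    have hnew : ν (B a \ U) ≤ ENNReal.ofReal c * μ (B a \ U) := by
      rw [hν a _ hdiff, ← setLIntegral_const]
      exact setLIntegral_mono measurable_const fun ω hω => ENNReal.ofReal_le_ofReal (hM a ω hω.1)
    rw [Finset.set_biUnion_insert, union_comm, ← union_sdiff_self,
      measure_union disjoint_sdiff_right (𝓕.le a _ hdiff),
      measure_union disjoint_sdiff_right (𝓕.le a _ hdiff), mul_add]
    exact add_le_add ih hnew

theorem measure_iUnion_le_of_density_le [IsProbabilityMeasure μ]
    (hν : ∀ t Λ, MeasurableSet[𝓕 t] Λ → ν Λ = ∫⁻ ω in Λ, ENNReal.ofReal (M t ω) ∂μ)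
    (hB : ∀ t, MeasurableSet[𝓕 t] (B t)) (hM : ∀ t, ∀ ω ∈ B t, M t ω ≤ c) (e : ℕ → ι) :
    ν (⋃ n, B (e n)) ≤ ENNReal.ofReal c := by
  rw [measure_iUnion_eq_iSup_accumulate]
  refine iSup_le fun n => ?_
  have hacc : accumulate (B ∘ e) n = ⋃ t ∈ (Finset.Iic n).image e, B t := by
    simp [accumulate_def]
  calc ν (accumulate (B ∘ e) n)
      ≤ ENNReal.ofReal c * μ (accumulate (B ∘ e) n) := by
        rw [hacc]; exact measure_biUnion_finset_le_of_density_le hν hB hM _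
    _ ≤ ENNReal.ofReal c := mul_le_of_le_one_right' prob_le_one

end DensityBound

theorem lsMeasureNN_Ioc {a : ℝ≥0 → ℝ} (ha_mono : Monotone a) (ha_cont : Continuous a)
    (s t : ℝ≥0) : lsMeasureNN a ha_mono ha_cont (Ioc s t) = ENNReal.ofReal (a t - a s) := by
  simp [lsMeasureNN, lsMeasure, StieltjesFunction.measure_Ioc]

theorem eq_zero_of_lsMeasureNN_eq_zero {a x : ℝ≥0 → ℝ} (ha_mono : Monotone a)
    (ha_cont : Continuous a) (hx : lsMeasureNN a ha_mono ha_cont {s | x s.toNNReal ≠ 0} = 0)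
    {τ : ℝ≥0} (hxτ : ContinuousWithinAt x (Ici τ) τ) (ha : ∀ s, τ < s → a τ < a s) :
    x τ = 0 := by
  by_contra hne
  obtain ⟨b, hτb, hb⟩ :=
    (nhdsGE_basis_Ico τ).eventually_iff.1 (hxτ.eventually (isOpen_ne.mem_nhds hne))
  obtain ⟨c, hτc, hcb⟩ := exists_between hτb
  have hsub : Ioc (τ : ℝ) c ⊆ {s | x s.toNNReal ≠ 0} := fun s hs =>
    hb ⟨(Real.lt_toNNReal_iff_coe_lt.2 hs.1).le,
      (Real.toNNReal_le_iff_le_coe.2 hs.2).trans_lt hcb⟩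
  have hzero : ENNReal.ofReal (a c - a τ) = 0 := by
    rw [← lsMeasureNN_Ioc ha_mono ha_cont]
    exact measure_mono_null hsub hx
  linarith [ENNReal.ofReal_eq_zero.1 hzero, ha c hτc]

theorem exists_le_and_forall_gt_lt {a : ℝ≥0 → ℝ} (ha_mono : Monotone a) (ha_cont : Continuous a)
    {u : ℝ} (h0 : a 0 ≤ u) {t : ℝ≥0} (ht : u < a t) :
    ∃ τ, a τ ≤ u ∧ ∀ s, τ < s → u < a s := by
  set S := {s | a s ≤ u}
  have hbdd : BddAbove S := ⟨t, fun s hs => le_of_not_gt fun hts =>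
    (ht.trans_le (ha_mono hts.le)).not_ge hs⟩
  refine ⟨sSup S, (isClosed_le ha_cont continuous_const).csSup_mem ⟨0, h0⟩ hbdd,
    fun s hs => lt_of_not_ge fun has => hs.not_ge (le_csSup hbdd has)⟩

theorem exists_denseRange_lt_and_le {a x : ℝ≥0 → ℝ} (ha_mono : Monotone a)
    (ha_cont : Continuous a) (hx : lsMeasureNN a ha_mono ha_cont {s | x s.toNNReal ≠ 0} = 0)
    (hx_rc : ∀ t, ContinuousWithinAt x (Ici t) t) {u : ℝ} (h0 : a 0 ≤ u) {t : ℝ≥0}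
    (ht : u < a t) {e : ℕ → ℝ≥0} (he : DenseRange e) {δ : ℝ} (hδ : 0 < δ) :
    ∃ n, u < a (e n) ∧ x (e n) ≤ δ := by
  obtain ⟨τ, hτ, hgt⟩ := exists_le_and_forall_gt_lt ha_mono ha_cont h0 ht
  have hxτ : x τ = 0 := eq_zero_of_lsMeasureNN_eq_zero ha_mono ha_cont hx (hx_rc τ)
    fun s hs => hτ.trans_lt (hgt s hs)
  have hsmall : ∀ᶠ s in 𝓝[≥] τ, x s < δ := (hx_rc τ).eventually (gt_mem_nhds (hxτ ▸ hδ))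
  obtain ⟨b, hτb, hb⟩ := (nhdsGE_basis_Ico τ).eventually_iff.1 hsmall
  obtain ⟨_, ⟨n, rfl⟩, hτn, hnb⟩ := he.exists_between hτb
  exact ⟨n, hgt _ hτn, (hb ⟨hτn.le, hnb⟩).le⟩

theorem setIntegral_Ioi_le_of_le {f : ℝ → ℝ} (hf : ∀ x, 0 ≤ f x) {a b : ℝ}
    (hfi : IntegrableOn f (Ioi a)) (hab : a ≤ b) : ∫ y in Ioi b, f y ≤ ∫ y in Ioi a, f y :=
  setIntegral_mono_set hfi (ae_of_all _ fun y => hf y) (Ioi_subset_Ioi hab).eventuallyLE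

theorem ENNReal.le_ofReal_of_forall_pos_le_ofReal_add_mul {x : ℝ≥0∞} {a C : ℝ}
    (h : ∀ δ, 0 < δ → x ≤ ENNReal.ofReal (a + C * δ)) : x ≤ ENNReal.ofReal a := by
  have hlim : Tendsto (fun δ => ENNReal.ofReal (a + C * δ)) (𝓝[>] 0) (𝓝 (ENNReal.ofReal a)) := by
    refine ENNReal.tendsto_ofReal (tendsto_nhdsWithin_of_tendsto_nhds ?_)
    have hcont : Continuous fun δ : ℝ => a + C * δ := by fun_prop
    simpa using hcont.tendsto 0
  exact ge_of_tendsto hlim (eventually_nhdsWithin_of_forall h)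

theorem measure_eq_top_eq_zero_of_forall_le {Ω : Type*} {m : MeasurableSpace Ω} {ν : Measure Ω}
    {Y : Ω → ℝ≥0∞} {g : ℝ → ℝ} (hg : Tendsto g atTop (𝓝 0))
    (h : ∀ u, 0 ≤ u → ν {ω | ENNReal.ofReal u < Y ω} ≤ ENNReal.ofReal (g u)) :
    ν {ω | Y ω = ⊤} = 0 := by
  refine nonpos_iff_eq_zero.1 (ge_of_tendsto (by simpa using ENNReal.tendsto_ofReal hg) ?_)
  filter_upwards [eventually_ge_atTop 0] with u hu
  exact (measure_mono fun ω (hω : Y ω = ⊤) => by simp [hω]).trans (h u hu)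

theorem stmt_15_general {Ω : Type*} {m : MeasurableSpace Ω} {μ : Measure Ω} [IsProbabilityMeasure μ]
    (𝓕 : Filtration ℝ≥0 m)
    (X N A : ℝ≥0 → Ω → ℝ)
    (hXnonneg : ∀ t ω, 0 ≤ X t ω)
    (hdecomp : ∀ t ω, X t ω = N t ω + A t ω)
    (hN : Martingale N 𝓕 μ)
    (hNrc : ∀ ω (t : ℝ≥0), ContinuousWithinAt (fun s => N s ω) (Set.Ici t) t)
    (hAadapted : Adapted 𝓕 A)
    (hAcont : ∀ ω, Continuous fun t => A t ω)
    (hAmono : ∀ ω, Monotone fun t => A t ω)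
    (hA0 : ∀ ω, A 0 ω = 0)
    (hcarried : ∀ ω, lsMeasureNN (fun t => A t ω) (hAmono ω) (hAcont ω)
        {s : ℝ | X (Real.toNNReal s) ω ≠ 0} = 0)
    (f : ℝ → ℝ) (hf_nonneg : ∀ x, 0 ≤ f x)
    (hf_bdd : ∃ C, ∀ x, f x ≤ C)
    (hf_int : IntegrableOn f (Set.Ici 0))
    (G : ℝ → ℝ) (hG : ∀ x, G x = ∫ y in Set.Ioi x, f y)
    (Pf : Measure Ω)
    (hPf : ∀ (t : ℝ≥0) (Λ : Set Ω), MeasurableSet[𝓕 t] Λ →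
      Pf Λ = ∫⁻ ω in Λ, ENNReal.ofReal (G (A t ω) + f (A t ω) * X t ω) ∂μ) :
    (∀ u : ℝ, 0 ≤ u →
      Pf {ω | ENNReal.ofReal u < ⨆ t : ℝ≥0, ENNReal.ofReal (A t ω)}
        ≤ ENNReal.ofReal (G u)) ∧
    Pf {ω | (⨆ t : ℝ≥0, ENNReal.ofReal (A t ω)) = ⊤} = 0 := by
  obtain ⟨C, hC⟩ := hf_bdd
  have hX : Adapted 𝓕 X := fun t => by
    rw [show X t = N t + A t from funext (hdecomp t)]
    exact (hN.stronglyAdapted t).measurable.add (hAadapted t)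
  have hXrc (ω : Ω) (t : ℝ≥0) : ContinuousWithinAt (fun s => X s ω) (Ici t) t := by
    simp only [hdecomp]
    exact (hNrc ω t).add (hAcont ω).continuousWithinAt
  have htail (u : ℝ) (hu : 0 ≤ u) :
      Pf {ω | ENNReal.ofReal u < ⨆ t : ℝ≥0, ENNReal.ofReal (A t ω)} ≤ ENNReal.ofReal (G u) := by
    refine ENNReal.le_ofReal_of_forall_pos_le_ofReal_add_mul (C := C) fun δ hδ => ?_
    let e := TopologicalSpace.denseSeq ℝ≥0
    calc _ ≤ Pf (⋃ n, {ω | u < A (e n) ω ∧ X (e n) ω ≤ δ}) := measure_mono fun ω (hω : ENNReal.ofReal u < _) => by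
          obtain ⟨t, ht⟩ := lt_iSup_iff.1 hω
          simpa using exists_denseRange_lt_and_le (hAmono ω) (hAcont ω) (hcarried ω) (hXrc ω)
            ((hA0 ω).trans_le hu) ((ENNReal.ofReal_lt_ofReal_iff'.1 ht).1)
            (TopologicalSpace.denseRange_denseSeq ℝ≥0) hδ
      _ ≤ ENNReal.ofReal (G u + C * δ) := by
        refine measure_iUnion_le_of_density_le hPf
          (fun t => (measurableSet_lt measurable_const (hAadapted t)).inter
            (measurableSet_le (hX t) measurable_const)) (fun t ω ⟨hA, hXδ⟩ => ?_) e
        have hGA : G (A t ω) ≤ G u := by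
          rw [hG, hG]
          exact setIntegral_Ioi_le_of_le hf_nonneg (hf_int.mono_set (Ioi_subset_Ici hu)) hA.le
        exact add_le_add hGA
          (mul_le_mul (hC _) hXδ (hXnonneg t ω) ((hf_nonneg 0).trans (hC 0)))
  have hG_lim : Tendsto G atTop (𝓝 0) := by
    rw [funext hG]
    exact tendsto_integral_Ioi_zero tendsto_id
  exact ⟨htail, measure_eq_top_eq_zero_of_forall_le hG_lim htail⟩

/-- for a true submartingale `X = N + A` of class `(Σ)`, `f > 0` bounded and
integrable with `G/f` bounded (`G x = ∫_x^∞ f`), and `𝒫^f` a finite measure whose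
restriction to each `𝓕 t` has density `M^f_t = G(A_t) + f(A_t) X_t` w.r.t. `P`, one has
`𝒫^f[A_∞ > u] ≤ G(u)` for all `u ≥ 0`, hence `𝒫^f[A_∞ = ∞] = 0`. -/
theorem stmt_15 {Ω : Type*} {m : MeasurableSpace Ω} {μ : Measure Ω} [IsProbabilityMeasure μ]
    (𝓕 : Filtration ℝ≥0 m)
    (hright : ∀ t : ℝ≥0, (𝓕 t : MeasurableSpace Ω) = ⨅ (s : ℝ≥0) (_ : t < s), 𝓕 s)
    (X N A : ℝ≥0 → Ω → ℝ)
    (hXnonneg : ∀ t ω, 0 ≤ X t ω)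
    (hdecomp : ∀ t ω, X t ω = N t ω + A t ω)
    (hN : Martingale N 𝓕 μ)
    (hNrc : ∀ ω (t : ℝ≥0), ContinuousWithinAt (fun s => N s ω) (Set.Ici t) t)
    (hNll : ∀ ω (t : ℝ≥0), 0 < t → ∃ l, Tendsto (fun s => N s ω) (𝓝[<] t) (𝓝 l))
    (hAadapted : Adapted 𝓕 A)
    (hAcont : ∀ ω, Continuous fun t => A t ω)
    (hAmono : ∀ ω, Monotone fun t => A t ω)
    (hA0 : ∀ ω, A 0 ω = 0)
    (hcarried : ∀ ω, lsMeasureNN (fun t => A t ω) (hAmono ω) (hAcont ω)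
        {s : ℝ | X (Real.toNNReal s) ω ≠ 0} = 0)
    (f : ℝ → ℝ) (hf_pos : ∀ x, 0 ≤ x → 0 < f x) (hf_nonneg : ∀ x, 0 ≤ f x)
    (hf_bdd : ∃ C, ∀ x, f x ≤ C)
    (hf_int : IntegrableOn f (Set.Ici 0))
    (G : ℝ → ℝ) (hG : ∀ x, G x = ∫ y in Set.Ioi x, f y)
    (hGf_bdd : ∃ C, ∀ x, 0 ≤ x → G x ≤ C * f x)
    (Pf : Measure Ω) [IsFiniteMeasure Pf]
    (hPf : ∀ (t : ℝ≥0) (Λ : Set Ω), MeasurableSet[𝓕 t] Λ →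
      Pf Λ = ∫⁻ ω in Λ, ENNReal.ofReal (G (A t ω) + f (A t ω) * X t ω) ∂μ) :
    (∀ u : ℝ, 0 ≤ u →
      Pf {ω | ENNReal.ofReal u < ⨆ t : ℝ≥0, ENNReal.ofReal (A t ω)}
        ≤ ENNReal.ofReal (G u)) ∧
    Pf {ω | (⨆ t : ℝ≥0, ENNReal.ofReal (A t ω)) = ⊤} = 0 :=
  stmt_15_general 𝓕 X N A hXnonneg hdecomp hN hNrc hAadapted hAcont hAmono hA0 hcarried f hf_nonneg
    hf_bdd hf_int G hG Pf hPf
end
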